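/- Let L ⊆ {0,1}^h be a set of leaves, 𝛕 a label of height h, and 𝛔 a non-interacting SWAP with indices I. Let s be an ℓ-bit string with ℓ ∉ I. Then s is a τL-truncation if and only if σ_ℓ s is a (𝛔𝛕)L-truncation; more precisely, if s is a prefix of some s_leaf ∈ τ_h L, then σ_ℓ s is a prefix of σ_h s_leaf ∈ (σ_h τ_h)L. -/

import Mathlib

abbrev F2 := ZMod 2

/-- The action of a permutation of positions on a list: `(π · l) j = l (π⁻¹ j)`.
(Out-of-range positions are filled with `default`; these are never used when the
permutation has support inside the length of the list.) -/
def permList {α : Type*} [Inhabited α] (π : Equiv.Perm ℕ) (l : List α) : List α :=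
  (List.range l.length).map fun j => l.getD (π.symm j) default

/-- A label of height `h`: a family of permutations `τ_ℓ` of the positions `{0, …, ℓ-1}`
(0-indexed); each `τ_ℓ` fixes all positions `≥ ℓ`. -/
def IsLabel (h : ℕ) (τ : ℕ → Equiv.Perm ℕ) : Prop :=
  ∀ ℓ j, ℓ ≤ h → ℓ ≤ j → τ ℓ j = j

/-- `σ` is the non-interacting SWAP of height `h` with indices `I` (0-indexed):
the pairs `{i,i+1}`, `i ∈ I`, are pairwise disjoint and contained in `{0,…,h-1}`, and
`σ_ℓ` is the product of the transpositions of positions `i, i+1` over `i ∈ I` with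
`i + 1 ≤ ℓ - 1`. -/
def IsNonInteractingSwap (h : ℕ) (I : Finset ℕ) (σ : ℕ → Equiv.Perm ℕ) : Prop :=
  (∀ i ∈ I, i + 2 ≤ h) ∧
  (∀ i ∈ I, ∀ j ∈ I, i ≠ j → i + 2 ≤ j ∨ j + 2 ≤ i) ∧
  (∀ ℓ, ∀ i ∈ I, i + 2 ≤ ℓ → σ ℓ i = i + 1 ∧ σ ℓ (i + 1) = i) ∧
  (∀ ℓ j, (¬∃ i ∈ I, i + 2 ≤ ℓ ∧ (j = i ∨ j = i + 1)) → σ ℓ j = j)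

/-- The map `σ⋆`: it sends an `ℓ`-bit string `s` to `s` (viewed as a starred string) if the
last position of `s` is not swapped out of the string (i.e. `ℓ ∉ I`, 1-indexed), and to
`(ωs)⋆` — last bit replaced by the placeholder `⋆` (here `none`) — otherwise. -/
def sigmaStar (I : Finset ℕ) (s : List Bool) : List (Option Bool) :=
  if s ≠ [] ∧ (s.length - 1) ∈ I then (s.dropLast.map some) ++ [none] else s.map some

/-- `s` is a `τL`-truncation: `s` is a prefix of some element of `τ_h L`. -/
def IsTrunc (τh : Equiv.Perm ℕ) (L : Finset (List Bool)) (s : List Bool) : Prop :=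
  ∃ t ∈ L, s <+: permList τh t

/-- `s` is `τL`-branching: either `s` is empty, or `s ∈ τ_h L`, or `0 < ‖s‖ < h` and both
`s0` and `s1` are `τL`-truncations. -/
def IsBranching (h : ℕ) (τh : Equiv.Perm ℕ) (L : Finset (List Bool)) (s : List Bool) :
    Prop :=
  s = [] ∨ (∃ t ∈ L, s = permList τh t) ∨
    (0 < s.length ∧ s.length < h ∧
      IsTrunc τh L (s ++ [false]) ∧ IsTrunc τh L (s ++ [true]))

/-- The branching truncation `Ω^{τL} s`: the longest strict prefix of `s` that is
`τL`-branching. -/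
noncomputable def Omega (h : ℕ) (τh : Equiv.Perm ℕ) (L : Finset (List Bool))
    (s : List Bool) : List Bool :=
  s.take (sSup {k | k < s.length ∧ IsBranching h τh L (s.take k)})

/-
A non-interacting SWAP is an involution on every level, and when `ℓ - 1 ∉ I` no swapped pair
straddles the cut between positions `ℓ - 1` and `ℓ`; hence `σ_ℓ` preserves `{0, …, ℓ-1}` and agrees
there with `σ_h`. Reading a prefix `s` of `u` through `σ_ℓ` is then the same as reading the first
`ℓ` letters of `σ_h u`, and since `σ` is an involution the correspondence is reversible.
-/

section PermList
variable {α : Type*} [Inhabited α]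

@[simp]
lemma permList_length (π : Equiv.Perm ℕ) (l : List α) : (permList π l).length = l.length := by
  simp [permList]

lemma permList_getElem (π : Equiv.Perm ℕ) (l : List α) {j : ℕ}
    (hj : j < (permList π l).length) : (permList π l)[j] = l.getD (π.symm j) default := by
  simp [permList]

lemma permList_one (l : List α) : permList 1 l = l :=
  List.ext_getElem (permList_length 1 l) fun j _ hj => by
    rw [permList_getElem]
    exact List.getD_eq_getElem _ _ hj

lemma permList_permList (π ρ : Equiv.Perm ℕ) (l : List α)
    (hπ : ∀ j < l.length, π.symm j < l.length) :
    permList π (permList ρ l) = permList (π * ρ) l := by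
  refine List.ext_getElem (by simp) fun j hj _ => ?_
  have hπj : π.symm j < (permList ρ l).length := by simpa using hπ j (by simpa using hj)
  rw [permList_getElem, permList_getElem, List.getD_eq_getElem _ _ hπj, permList_getElem]
  rfl

lemma permList_permList_of_mul_self (π : Equiv.Perm ℕ) (hπ2 : π * π = 1) (l : List α)
    (hπ : ∀ j < l.length, π.symm j < l.length) : permList π (permList π l) = l := by
  rw [permList_permList π π l hπ, hπ2, permList_one]

lemma permList_prefix_permList {π ρ : Equiv.Perm ℕ} {s u : List α} (hsu : s <+: u)
    (hπ : ∀ j < s.length, π.symm j < s.length) (hρ : ∀ j < s.length, ρ.symm j = π.symm j) :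
    permList π s <+: permList ρ u := by
  refine List.prefix_iff_getElem.2 ⟨by simpa using hsu.length_le, fun j hj => ?_⟩
  have hj' : j < s.length := by simpa using hj
  have hρu : ρ.symm j < u.length := hρ j hj' ▸ (hπ j hj').trans_le hsu.length_le
  rw [permList_getElem, permList_getElem, List.getD_eq_getElem _ _ (hπ j hj'),
    List.getD_eq_getElem _ _ hρu]
  simp only [hρ j hj']
  exact hsu.getElem _

end PermList

namespace IsNonInteractingSwap
variable {h : ℕ} {I : Finset ℕ} {σ : ℕ → Equiv.Perm ℕ}

lemma apply_apply (hσ : IsNonInteractingSwap h I σ) (ℓ j : ℕ) : σ ℓ (σ ℓ j) = j := by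
  obtain ⟨-, -, hswap, hfix⟩ := hσ
  by_cases hj : ∃ i ∈ I, i + 2 ≤ ℓ ∧ (j = i ∨ j = i + 1)
  · obtain ⟨i, hi, hiℓ, rfl | rfl⟩ := hj
    · rw [(hswap ℓ _ hi hiℓ).1, (hswap ℓ _ hi hiℓ).2]
    · rw [(hswap ℓ i hi hiℓ).2, (hswap ℓ i hi hiℓ).1]
  · rw [hfix ℓ j hj, hfix ℓ j hj]

lemma mul_self (hσ : IsNonInteractingSwap h I σ) (ℓ : ℕ) : σ ℓ * σ ℓ = 1 :=
  Equiv.ext fun j => hσ.apply_apply ℓ j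

lemma symm_apply (hσ : IsNonInteractingSwap h I σ) (ℓ j : ℕ) : (σ ℓ).symm j = σ ℓ j :=
  (Equiv.symm_apply_eq _).2 (hσ.apply_apply ℓ j).symm

lemma apply_lt (hσ : IsNonInteractingSwap h I σ) {ℓ j : ℕ} (hj : j < ℓ) : σ ℓ j < ℓ := by
  obtain ⟨-, -, hswap, hfix⟩ := hσ
  by_cases hj' : ∃ i ∈ I, i + 2 ≤ ℓ ∧ (j = i ∨ j = i + 1)
  · obtain ⟨i, hi, hiℓ, rfl | rfl⟩ := hj'
    · rw [(hswap ℓ _ hi hiℓ).1]; omega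
    · rw [(hswap ℓ i hi hiℓ).2]; omega
  · rwa [hfix ℓ j hj']

lemma symm_apply_lt (hσ : IsNonInteractingSwap h I σ) {ℓ j : ℕ} (hj : j < ℓ) :
    (σ ℓ).symm j < ℓ :=
  hσ.symm_apply ℓ j ▸ hσ.apply_lt hj

lemma apply_eq_apply_height (hσ : IsNonInteractingSwap h I σ) {ℓ j : ℕ} (hℓ : ℓ - 1 ∉ I)
    (hj : j < ℓ) : σ ℓ j = σ h j := by
  obtain ⟨hI, -, hswap, hfix⟩ := hσ
  by_cases hj' : ∃ i ∈ I, i + 2 ≤ ℓ ∧ (j = i ∨ j = i + 1)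
  · obtain ⟨i, hi, hiℓ, rfl | rfl⟩ := hj'
    · rw [(hswap ℓ _ hi hiℓ).1, (hswap h _ hi (hI _ hi)).1]
    · rw [(hswap ℓ i hi hiℓ).2, (hswap h i hi (hI i hi)).2]
  · refine (hfix ℓ j hj').trans (hfix h j ?_).symm
    rintro ⟨i, hi, -, hji⟩
    -- a pair not inside `{0, …, ℓ-1}` but meeting it must start at `ℓ - 1`
    have hiℓ : ¬i + 2 ≤ ℓ := fun hiℓ => hj' ⟨i, hi, hiℓ, hji⟩
    exact hℓ (by convert hi using 1; omega)

lemma permList_permList_self {α : Type*} [Inhabited α] (hσ : IsNonInteractingSwap h I σ)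
    {ℓ : ℕ} {l : List α} (hl : l.length = ℓ) : permList (σ ℓ) (permList (σ ℓ) l) = l :=
  permList_permList_of_mul_self _ (hσ.mul_self ℓ) l fun _ hj => hl ▸ hσ.symm_apply_lt (hl ▸ hj)

end IsNonInteractingSwap

theorem stmt6_general (h : ℕ) (I : Finset ℕ) (σ τ : ℕ → Equiv.Perm ℕ) (L : Finset (List Bool))
    (hσ : IsNonInteractingSwap h I σ)
    (hL : ∀ t ∈ L, t.length = h)
    (s : List Bool)
    (hnot : s = [] ∨ (s.length - 1) ∉ I) :
    (IsTrunc (τ h) L s ↔ IsTrunc (σ h * τ h) L (permList (σ s.length) s)) ∧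
    (∀ t ∈ L, s <+: permList (τ h) t →
      permList (σ s.length) s <+: permList (σ h) (permList (τ h) t) ∧
      permList (σ h) (permList (τ h) t) = permList (σ h * τ h) t) := by
  have hagree : ∀ j < s.length, (σ h).symm j = (σ s.length).symm j := by
    rcases hnot with rfl | hℓ
    · simp
    · intro j hj
      rw [hσ.symm_apply, hσ.symm_apply, hσ.apply_eq_apply_height hℓ hj]
  have hprefix : ∀ {s' u : List Bool}, s'.length = s.length → s' <+: u →
      permList (σ s.length) s' <+: permList (σ h) u := fun hs' hsu =>
    permList_prefix_permList hsu (fun _ hj => hs' ▸ hσ.symm_apply_lt (hs' ▸ hj)) (hs' ▸ hagree)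
  have hmul : ∀ t ∈ L, permList (σ h) (permList (τ h) t) = permList (σ h * τ h) t :=
    fun t ht => permList_permList _ _ t fun _ hj => hL t ht ▸ hσ.symm_apply_lt (hL t ht ▸ hj)
  refine ⟨⟨fun ⟨t, ht, hst⟩ => ⟨t, ht, hmul t ht ▸ hprefix rfl hst⟩, fun ⟨t, ht, hst⟩ => ?_⟩,
    fun t ht hst => ⟨hprefix rfl hst, hmul t ht⟩⟩
  have hback := hprefix (permList_length _ s) (hmul t ht ▸ hst)
  rw [hσ.permList_permList_self rfl,
    hσ.permList_permList_self (by rw [permList_length, hL t ht])] at hback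
  exact ⟨t, ht, hback⟩

theorem stmt6 (h : ℕ) (I : Finset ℕ) (σ τ : ℕ → Equiv.Perm ℕ) (L : Finset (List Bool))
    (hσ : IsNonInteractingSwap h I σ) (hτ : IsLabel h τ)
    (hL : ∀ t ∈ L, t.length = h)
    (s : List Bool) (hs : s.length ≤ h)
    (hnot : s = [] ∨ (s.length - 1) ∉ I) :
    (IsTrunc (τ h) L s ↔ IsTrunc (σ h * τ h) L (permList (σ s.length) s)) ∧
    (∀ t ∈ L, s <+: permList (τ h) t →
      permList (σ s.length) s <+: permList (σ h) (permList (τ h) t) ∧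
      permList (σ h) (permList (τ h) t) = permList (σ h * τ h) t) :=
  stmt6_general h I σ τ L hσ hL s hnot
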